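/- arXiv:2511.11544 — 3 statements merged into one kernel-verified Lean document; each statement's English description precedes it below -/
import Mathlib

section
/- Let G be a finite group and H a subgroup of G. Then |Solv(H)| ≤ |Solv(G)|, where Solv(H) is computed with solvabilizers taken inside the group H. -/
/-- The solvabilizer of an element `x` of a group `G`:
the set of `y ∈ G` such that `⟨x, y⟩` is solvable. -/
def solvabilizer {G : Type*} [Group G] (x : G) : Set G :=
  {y | IsSolvable ↥(Subgroup.closure {x, y})}

/-- `Solv(G)`, the set of distinct solvabilizers of elements of `G`. -/
def solvSet (G : Type*) [Group G] : Set (Set G) :=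
  Set.range fun x : G => solvabilizer x

/-! Whether `⟨x, y⟩` is solvable does not depend on the ambient group,
so `Sol_H(x) = H ∩ Sol_G(x)`. Hence `S ↦ H ∩ S` maps part of `Solv(G)` onto `Solv(H)`. -/

theorem MulEquiv.isSolvable_iff {G G' : Type*} [Group G] [Group G'] (e : G ≃* G') :
    Group.IsSolvable G ↔ Group.IsSolvable G' :=
  ⟨fun _ => Group.isSolvable_of_surjective (f := e.toMonoidHom) e.surjective,
    fun _ => Group.isSolvable_of_surjective (f := e.symm.toMonoidHom) e.symm.surjective⟩

theorem Subgroup.isSolvable_closure_image_subtype_iff {G : Type*} [Group G] (H : Subgroup G)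
    (s : Set H) :
    Group.IsSolvable (closure (((↑) : H → G) '' s)) ↔ Group.IsSolvable (closure s) := by
  rw [← H.coe_subtype, ← MonoidHom.map_closure]
  exact ((closure s).equivMapOfInjective H.subtype H.subtype_injective).isSolvable_iff.symm

theorem solvabilizer_subgroup {G : Type*} [Group G] (H : Subgroup G) (x : H) :
    solvabilizer x = Subtype.val ⁻¹' solvabilizer (x : G) := by
  ext y
  change Group.IsSolvable (Subgroup.closure {x, y}) ↔
    Group.IsSolvable (Subgroup.closure {(x : G), (y : G)})
  rw [← Set.image_pair, H.isSolvable_closure_image_subtype_iff]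

theorem solvSet_subgroup_subset_image {G : Type*} [Group G] (H : Subgroup G) :
    solvSet H ⊆ (Subtype.val ⁻¹' ·) '' solvSet G := by
  rintro _ ⟨x, rfl⟩
  exact ⟨solvabilizer (x : G), ⟨x, rfl⟩, (solvabilizer_subgroup H x).symm⟩

/-- If `H` is a subgroup of a finite group `G`, then `|Solv(H)| ≤ |Solv(G)|`,
where `Solv(H)` is computed with solvabilizers taken inside the group `H`. -/
theorem solvSet_ncard_le_of_subgroup {G : Type*} [Group G] [Finite G] (H : Subgroup G) :
    (solvSet ↥H).ncard ≤ (solvSet G).ncard :=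
  calc (solvSet H).ncard
      ≤ ((Subtype.val ⁻¹' ·) '' solvSet G).ncard :=
        Set.ncard_le_ncard (solvSet_subgroup_subset_image H) (Set.toFinite _)
    _ ≤ (solvSet G).ncard := Set.ncard_image_le (Set.toFinite _)
end

section
/- Let G be a finite group and let N be the solvable radical of G, i.e., N is a normal solvable subgroup of G containing every normal solvable subgroup of G. If N ≠ 1, then |Solv(G)| = |Solv(G/N)|. -/
namespace Group

variable {G G' : Type*} [Group G] [Group G']

theorem isSolvable_map_iff_of_isSolvable_ker (f : G →* G') [IsSolvable f.ker] (H : Subgroup G) :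
    IsSolvable (H.map f) ↔ IsSolvable H := by
  constructor
  · intro
    let g := f.subgroupMap H
    have : IsSolvable g.ker := by
      let ι : g.ker →* f.ker := (H.subtype.comp g.ker.subtype).codRestrict f.ker
        fun k => congrArg Subtype.val k.2
      exact isSolvable_of_isSolvable_injective (f := ι)
        fun a b hab => Subtype.ext <| Subtype.ext (congrArg Subtype.val hab :)
    exact isSolvable_of_ker_le_range g.ker.subtype g (Subgroup.range_subtype _).ge
  · intro
    exact isSolvable_of_surjective (f.subgroupMap_surjective H)

end Group

theorem solvabilizer_eq_preimage {G G' : Type*} [Group G] [Group G'] (f : G →* G')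
    [Group.IsSolvable f.ker] (x : G) : solvabilizer x = f ⁻¹' solvabilizer (f x) := by
  ext y
  change Group.IsSolvable (Subgroup.closure {x, y}) ↔
    Group.IsSolvable (Subgroup.closure {f x, f y})
  rw [← Set.image_pair, ← MonoidHom.map_closure, Group.isSolvable_map_iff_of_isSolvable_ker]

theorem solvSet_eq_image_preimage {G G' : Type*} [Group G] [Group G'] (f : G →* G')
    (hf : Function.Surjective f) [Group.IsSolvable f.ker] :
    solvSet G = (f ⁻¹' ·) '' solvSet G' := by
  ext S
  constructor
  · rintro ⟨x, rfl⟩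
    exact ⟨_, ⟨f x, rfl⟩, (solvabilizer_eq_preimage f x).symm⟩
  · rintro ⟨_, ⟨z, rfl⟩, rfl⟩
    obtain ⟨x, rfl⟩ := hf z
    exact ⟨x, solvabilizer_eq_preimage f x⟩

theorem solvSet_ncard_eq_of_surjective {G G' : Type*} [Group G] [Group G'] (f : G →* G')
    (hf : Function.Surjective f) [Group.IsSolvable f.ker] :
    (solvSet G).ncard = (solvSet G').ncard := by
  rw [solvSet_eq_image_preimage f hf, Set.ncard_image_of_injective _ (Set.preimage_injective.mpr hf)]

theorem solvSet_ncard_quotient_solvableRadical_general {G : Type*} [Group G]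
    (N : Subgroup G) [N.Normal] (hNsolv : IsSolvable ↥N) :
    (solvSet G).ncard = (solvSet (G ⧸ N)).ncard := by
  have : Group.IsSolvable (QuotientGroup.mk' N).ker := by rwa [QuotientGroup.ker_mk']
  exact solvSet_ncard_eq_of_surjective _ (QuotientGroup.mk'_surjective N)

/-- Let `N` be the solvable radical of a finite group `G` (a normal solvable subgroup
containing every normal solvable subgroup). If `N ≠ 1`, then `|Solv(G)| = |Solv(G/N)|`. -/
theorem solvSet_ncard_quotient_solvableRadical {G : Type*} [Group G] [Finite G]
    (N : Subgroup G) [N.Normal] (hNsolv : IsSolvable ↥N)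
    (hNmax : ∀ M : Subgroup G, M.Normal → IsSolvable ↥M → M ≤ N)
    (hN : N ≠ ⊥) :
    (solvSet G).ncard = (solvSet (G ⧸ N)).ncard :=
  solvSet_ncard_quotient_solvableRadical_general N hNsolv
end

section
/- Let G be a finite group and x ∈ G. Then the normalizer of the cyclic subgroup ⟨x⟩ is contained in the normalizer of the set Sol_G(x); that is, if h ∈ G satisfies h⟨x⟩h⁻¹ = ⟨x⟩, then h·Sol_G(x)·h⁻¹ = Sol_G(x). -/
open Subgroup

section

variable {G H : Type*} [Group G] [Group H]

theorem Subgroup.closure_pair_eq_zpowers_sup_zpowers (x y : G) :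
    closure {x, y} = zpowers x ⊔ zpowers y := by
  rw [Set.insert_eq, closure_union, zpowers_eq_closure, zpowers_eq_closure]

theorem solvabilizer_eq_of_zpowers_eq {x x' : G} (hx : zpowers x = zpowers x') :
    solvabilizer x = solvabilizer x' := by
  ext y
  change Group.IsSolvable (closure {x, y}) ↔ Group.IsSolvable (closure {x', y})
  rw [closure_pair_eq_zpowers_sup_zpowers, closure_pair_eq_zpowers_sup_zpowers, hx]

theorem image_solvabilizer_subset (f : G →* H) (x : G) :
    f '' solvabilizer x ⊆ solvabilizer (f x) := by
  rintro _ ⟨y, hy, rfl⟩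
  have : Group.IsSolvable (closure {x, y}) := hy
  have hmap : closure {f x, f y} = (closure {x, y}).map f := by
    rw [MonoidHom.map_closure, Set.image_pair]
  change Group.IsSolvable (closure {f x, f y})
  rw [hmap]
  exact Group.isSolvable_of_surjective (f.subgroupMap_surjective _)

theorem image_solvabilizer_mulEquiv (f : G ≃* H) (x : G) :
    f '' solvabilizer x = solvabilizer (f x) := by
  refine (image_solvabilizer_subset f.toMonoidHom x).antisymm fun y hy => ?_
  refine ⟨f.symm y, ?_, f.apply_symm_apply y⟩
  simpa using image_solvabilizer_subset f.symm.toMonoidHom (f x) ⟨y, hy, rfl⟩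

end

theorem normalizer_zpowers_le_normalizer_solvabilizer_general
    {G : Type*} [Group G] (x h : G)
    (hh : (fun g => h * g * h⁻¹) '' (Subgroup.zpowers x : Set G) =
      (Subgroup.zpowers x : Set G)) :
    (fun g => h * g * h⁻¹) '' solvabilizer x = solvabilizer x := by
  have hzpowers : zpowers (h * x * h⁻¹) = zpowers x := by
    apply SetLike.coe_injective
    calc (zpowers (h * x * h⁻¹) : Set G)
        = (zpowers x).map (MulAut.conj h).toMonoidHom := by rw [MonoidHom.map_zpowers]; rfl
      _ = zpowers x := hh
  calc (fun g => h * g * h⁻¹) '' solvabilizer x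
      = solvabilizer (h * x * h⁻¹) := image_solvabilizer_mulEquiv (MulAut.conj h) x
    _ = solvabilizer x := solvabilizer_eq_of_zpowers_eq hzpowers

/-- If `h` normalizes the cyclic subgroup `⟨x⟩`, i.e. `h⟨x⟩h⁻¹ = ⟨x⟩`,
then `h` normalizes the set `Sol_G(x)`, i.e. `h·Sol_G(x)·h⁻¹ = Sol_G(x)`. -/
theorem normalizer_zpowers_le_normalizer_solvabilizer
    {G : Type*} [Group G] [Finite G] (x h : G)
    (hh : (fun g => h * g * h⁻¹) '' (Subgroup.zpowers x : Set G) =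
      (Subgroup.zpowers x : Set G)) :
    (fun g => h * g * h⁻¹) '' solvabilizer x = solvabilizer x :=
  normalizer_zpowers_le_normalizer_solvabilizer_general x h hh
end
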